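/- arXiv:1808.07370 — 6 statements merged into one kernel-verified Lean document; each statement's English description precedes it below -/
import Mathlib

section
/- An algebra (A, ·, 0) of type (2,0) is a UP-algebra if and only if it satisfies: (1) (y·z)·((x·y)·(x·z)) = 0; (2) (y·0)·x = x; (3) x·y = 0 and y·x = 0 imply x = y, for all x,y,z ∈ A. -/
theorem up_algebra_characterization {A : Type*} (m : A → A → A) (z : A) :
    ((∀ x y w : A, m (m y w) (m (m x y) (m x w)) = z) ∧
     (∀ x : A, m z x = x) ∧
     (∀ x : A, m x z = z) ∧
     (∀ x y : A, m x y = z → m y x = z → x = y)) ↔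
    ((∀ x y w : A, m (m y w) (m (m x y) (m x w)) = z) ∧
     (∀ x y : A, m (m y z) x = x) ∧
     (∀ x y : A, m x y = z → m y x = z → x = y)) := by
  constructor
  · rintro ⟨h1, h2, h3, h4⟩
    exact ⟨h1, fun x y => by rw [h3 y, h2], h4⟩
  · rintro ⟨h1, h2, h4⟩
    -- (*) : m (m x y) (m x z) = z
    have star : ∀ x y : A, m (m x y) (m x z) = z := fun x y => by
      have := h1 x y z
      rwa [h2 _ y] at this
    have h3 : ∀ x : A, m x z = z := fun x => by
      have := star (m x z) x
      rwa [h2 _ x, h2 _ x] at this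
    have hz : ∀ x : A, m z x = x := fun x => by
      have := h2 x x
      rwa [h3 x] at this
    exact ⟨h1, hz, h3, h4⟩
end

section
/- Let A be a UP-algebra and B a UP-ideal of A. If a, b ∈ B, then (b·(a·x))·x ∈ B for every x ∈ A. -/
class UPAlgebra (A : Type*) extends Mul A, Zero A where
  up1 : ∀ x y z : A, (y * z) * ((x * y) * (x * z)) = 0
  up2 : ∀ x : A, 0 * x = x
  up3 : ∀ x : A, x * 0 = 0
  up4 : ∀ x y : A, x * y = 0 → y * x = 0 → x = y

def IsUPIdeal {A : Type*} [UPAlgebra A] (B : Set A) : Prop :=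
  (0 : A) ∈ B ∧ ∀ x y z : A, x * (y * z) ∈ B → y ∈ B → x * z ∈ B

lemma up_self {A : Type*} [UPAlgebra A] (t : A) : t * t = 0 := by
  have h := UPAlgebra.up1 (0 : A) t (0 : A)
  simpa [UPAlgebra.up2, UPAlgebra.up3] using UPAlgebra.up1 (0 : A) (0 : A) t

theorem up_ideal_double {A : Type*} [UPAlgebra A] {B : Set A} (hB : IsUPIdeal B) :
    ∀ a b x : A, a ∈ B → b ∈ B → (b * (a * x)) * x ∈ B := by
  intro a b x ha hb
  set t := b * (a * x) with ht
  have h1 : t * (b * (a * x)) ∈ B := by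
    rw [← ht, up_self]; exact hB.1
  have h2 : t * (a * x) ∈ B := hB.2 t b (a * x) h1 hb
  exact hB.2 t a x h2 ha
end

section
/- Let A be a UP-algebra and ρ a congruence on A. Then the ρ-class (0)_ρ = {y ∈ A : y ρ 0} is a UP-ideal of A. -/
theorem congruence_zero_class_up_ideal {A : Type*} [UPAlgebra A] {r : A → A → Prop}
    (hequiv : Equivalence r)
    (hcompat : ∀ x y z : A, r x y → r (x * z) (y * z) ∧ r (z * x) (z * y)) :
    IsUPIdeal {y : A | r y 0} := by
  refine ⟨hequiv.refl 0, ?_⟩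
  intro x y z hx hy
  have h1 : r (y * z) z := by
    have := (hcompat y 0 z hy).1
    rwa [UPAlgebra.up2 z] at this
  have h2 : r (x * (y * z)) (x * z) := (hcompat (y * z) z x h1).2
  exact hequiv.trans (hequiv.symm h2) hx
end

section
/- Let A be a UP-algebra and B a UP-ideal of A. Then the quotient set A/∼_B = {(x)_{∼_B} : x ∈ A}, with operation (x)_{∼_B} ∗ (y)_{∼_B} = (x·y)_{∼_B} and constant (0)_{∼_B}, is a UP-algebra, and the operation ∗ is well-defined. -/
section Aux
variable {A : Type*} [UPAlgebra A] {B : Set A}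

lemma up_self_s15 (x : A) : x * x = 0 := by
  have h := UPAlgebra.up1 (0 : A) (0 : A) x
  rwa [UPAlgebra.up2, UPAlgebra.up3, UPAlgebra.up2] at h

lemma left_mem (hB : IsUPIdeal B) {y z : A} (h : y * z ∈ B) (x : A) :
    (x * y) * (x * z) ∈ B := by
  have h1 : (0 : A) * ((y * z) * ((x * y) * (x * z))) ∈ B := by
    rw [UPAlgebra.up2, UPAlgebra.up1]; exact hB.1
  have := hB.2 0 (y * z) ((x * y) * (x * z)) h1 h
  rwa [UPAlgebra.up2] at this

lemma right_mem (hB : IsUPIdeal B) {x x' : A} (h : x * x' ∈ B) (y : A) :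
    (x' * y) * (x * y) ∈ B := by
  have h1 : (x' * y) * ((x * x') * (x * y)) ∈ B := by
    rw [UPAlgebra.up1]; exact hB.1
  exact hB.2 (x' * y) (x * x') (x * y) h1 h

lemma trans_mem (hB : IsUPIdeal B) {x y z : A} (h1 : x * y ∈ B) (h2 : y * z ∈ B) :
    x * z ∈ B := by
  have h3 : (x * y) * (x * z) ∈ B := left_mem hB h2 x
  have h4 : (0 : A) * ((x * y) * (x * z)) ∈ B := by rwa [UPAlgebra.up2]
  have := hB.2 0 (x * y) (x * z) h4 h1
  rwa [UPAlgebra.up2] at this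

lemma eqvgen_r (hB : IsUPIdeal B)
    {a b : A} (h : Relation.EqvGen (fun x y : A => x * y ∈ B ∧ y * x ∈ B) a b) :
    a * b ∈ B ∧ b * a ∈ B := by
  induction h with
  | rel _ _ h => exact h
  | refl x => exact ⟨by rw [up_self_s15]; exact hB.1, by rw [up_self_s15]; exact hB.1⟩
  | symm _ _ _ ih => exact ⟨ih.2, ih.1⟩
  | trans _ _ _ _ _ ih1 ih2 =>
      exact ⟨trans_mem hB ih1.1 ih2.1, trans_mem hB ih2.2 ih1.2⟩

end Aux

theorem quotient_up_algebra {A : Type*} [UPAlgebra A] {B : Set A} (hB : IsUPIdeal B) :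
    ∃ m : Quot (fun x y : A => x * y ∈ B ∧ y * x ∈ B) →
          Quot (fun x y : A => x * y ∈ B ∧ y * x ∈ B) →
          Quot (fun x y : A => x * y ∈ B ∧ y * x ∈ B),
      (∀ x y : A, m (Quot.mk _ x) (Quot.mk _ y) = Quot.mk _ (x * y)) ∧
      (∀ a b c, m (m b c) (m (m a b) (m a c)) = Quot.mk _ (0 : A)) ∧
      (∀ a, m (Quot.mk _ (0 : A)) a = a) ∧
      (∀ a, m a (Quot.mk _ (0 : A)) = Quot.mk _ (0 : A)) ∧
      (∀ a b, m a b = Quot.mk _ (0 : A) → m b a = Quot.mk _ (0 : A) → a = b) := by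
  set r : A → A → Prop := fun x y => x * y ∈ B ∧ y * x ∈ B with hr
  have hcompat : ∀ x x' y y' : A, r x x' → r y y' →
      Quot.mk r (x * y) = Quot.mk r (x' * y') := by
    intro x x' y y' hx hy
    apply Quot.sound
    constructor
    · exact trans_mem hB (right_mem hB hx.2 y) (left_mem hB hy.1 x')
    · exact trans_mem hB (right_mem hB hx.1 y') (left_mem hB hy.2 x)
  refine ⟨Quot.lift (fun x => Quot.lift (fun y => Quot.mk r (x * y))
      (fun y y' hy => hcompat x x y y' ⟨by rw [up_self_s15]; exact hB.1,
        by rw [up_self_s15]; exact hB.1⟩ hy))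
    (fun x x' hx => by
      funext q
      induction q using Quot.ind with
      | _ y => exact hcompat x x' y y hx ⟨by rw [up_self_s15]; exact hB.1,
          by rw [up_self_s15]; exact hB.1⟩), ?_, ?_, ?_, ?_, ?_⟩
  · intro x y; rfl
  · intro a b c
    induction a using Quot.ind with | _ x => ?_
    induction b using Quot.ind with | _ y => ?_
    induction c using Quot.ind with | _ z => ?_
    simp only []
    show Quot.mk r ((y * z) * ((x * y) * (x * z))) = Quot.mk r 0
    rw [UPAlgebra.up1]
  · intro a
    induction a using Quot.ind with | _ x => ?_
    show Quot.mk r ((0 : A) * x) = Quot.mk r x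
    rw [UPAlgebra.up2]
  · intro a
    induction a using Quot.ind with | _ x => ?_
    show Quot.mk r (x * (0 : A)) = Quot.mk r 0
    rw [UPAlgebra.up3]
  · intro a b
    induction a using Quot.ind with | _ x => ?_
    induction b using Quot.ind with | _ y => ?_
    intro h1 h2
    apply Quot.sound
    have e1 : Quot.mk r (x * y) = Quot.mk r 0 := h1
    have e2 : Quot.mk r (y * x) = Quot.mk r 0 := h2
    have g1 := eqvgen_r hB (Quot.eq.mp e1)
    have g2 := eqvgen_r hB (Quot.eq.mp e2)
    rw [UPAlgebra.up2] at g1 g2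
    exact ⟨g1.2, g2.2⟩
end

section
/- Fundamental theorem of UP-homomorphisms: Let f: A → B be a UP-homomorphism of UP-algebras, K = Ker(f), and ∼_K the congruence induced by K. Then there exists a unique UP-homomorphism φ: A/∼_K → B with f = φ ∘ π_K, where π_K is the natural projection x ↦ (x)_{∼_K}. Moreover φ is injective, and φ is a UP-isomorphism if and only if f is surjective. -/
lemma up_self_mul {A : Type*} [UPAlgebra A] (x : A) : x * x = 0 := by
  have h := UPAlgebra.up1 (0 : A) (0 : A) x
  simpa [UPAlgebra.up2, UPAlgebra.up3] using h

theorem fundamental_theorem_up_hom {A B : Type*} [UPAlgebra A] [UPAlgebra B] {f : A → B}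
    (hf : ∀ x y : A, f (x * y) = f x * f y)
    (m : Quot (fun x y : A => x * y ∈ {a : A | f a = 0} ∧ y * x ∈ {a : A | f a = 0}) →
         Quot (fun x y : A => x * y ∈ {a : A | f a = 0} ∧ y * x ∈ {a : A | f a = 0}) →
         Quot (fun x y : A => x * y ∈ {a : A | f a = 0} ∧ y * x ∈ {a : A | f a = 0}))
    (hm : ∀ x y : A, m (Quot.mk _ x) (Quot.mk _ y) = Quot.mk _ (x * y)) :
    ∃ φ : Quot (fun x y : A => x * y ∈ {a : A | f a = 0} ∧ y * x ∈ {a : A | f a = 0}) → B,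
      (∀ a b, φ (m a b) = φ a * φ b) ∧
      (∀ x : A, φ (Quot.mk _ x) = f x) ∧
      (∀ ψ, (∀ x : A, ψ (Quot.mk _ x) = f x) → ψ = φ) ∧
      Function.Injective φ ∧
      (Function.Bijective φ ↔ Function.Surjective f) := by
  have hsound : ∀ x y : A,
      (x * y ∈ {a : A | f a = 0} ∧ y * x ∈ {a : A | f a = 0}) → f x = f y := by
    intro x y ⟨h1, h2⟩
    simp only [Set.mem_setOf_eq, hf] at h1 h2
    exact UPAlgebra.up4 _ _ h1 h2
  refine ⟨Quot.lift f hsound, ?_, ?_, ?_, ?_, ?_⟩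
  · intro a b
    induction a using Quot.ind
    induction b using Quot.ind
    rw [hm]; exact hf _ _
  · intro x; rfl
  · intro ψ hψ
    funext q
    induction q using Quot.ind
    exact hψ _
  · intro a b hab
    induction a using Quot.ind with | _ x => ?_
    induction b using Quot.ind with | _ y => ?_
    have hxy : f x = f y := hab
    apply Quot.sound
    constructor <;> simp only [Set.mem_setOf_eq, hf, hxy, up_self_mul]
  · constructor
    · intro ⟨_, hs⟩ b
      obtain ⟨q, hq⟩ := hs b
      obtain ⟨x, rfl⟩ := Quot.exists_rep q
      exact ⟨x, hq⟩
    · intro hs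
      refine ⟨?_, ?_⟩
      · intro a b hab
        induction a using Quot.ind with | _ x => ?_
        induction b using Quot.ind with | _ y => ?_
        have hxy : f x = f y := hab
        apply Quot.sound
        constructor <;> simp only [Set.mem_setOf_eq, hf, hxy, up_self_mul]
      · intro b
        obtain ⟨x, hx⟩ := hs b
        exact ⟨Quot.mk _ x, hx⟩
end

section
/- First UP-isomorphism theorem: Let f: A → B be a UP-homomorphism of UP-algebras. Then the quotient UP-algebra A/∼_{Ker(f)} is UP-isomorphic to Im(f) (a UP-subalgebra of B). -/
theorem first_up_isomorphism {A B : Type*} [UPAlgebra A] [UPAlgebra B] {f : A → B}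
    (hf : ∀ x y : A, f (x * y) = f x * f y)
    (m : Quot (fun x y : A => x * y ∈ {a : A | f a = 0} ∧ y * x ∈ {a : A | f a = 0}) →
         Quot (fun x y : A => x * y ∈ {a : A | f a = 0} ∧ y * x ∈ {a : A | f a = 0}) →
         Quot (fun x y : A => x * y ∈ {a : A | f a = 0} ∧ y * x ∈ {a : A | f a = 0}))
    (hm : ∀ x y : A, m (Quot.mk _ x) (Quot.mk _ y) = Quot.mk _ (x * y)) :
    ∃ g : Quot (fun x y : A => x * y ∈ {a : A | f a = 0} ∧ y * x ∈ {a : A | f a = 0}) → B,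
      (∀ a b, g (m a b) = g a * g b) ∧
      Function.Injective g ∧
      Set.range g = Set.range f := by
  have selfmul : ∀ (C : Type _) [UPAlgebra C], ∀ c : C, c * c = 0 := by
    intro C _ c
    have h := UPAlgebra.up1 (0 : C) 0 c
    rwa [UPAlgebra.up2, UPAlgebra.up3, UPAlgebra.up2] at h
  refine ⟨Quot.lift f ?_, ?_, ?_, ?_⟩
  · rintro a b ⟨h1, h2⟩
    simp only [Set.mem_setOf_eq, hf] at h1 h2
    exact UPAlgebra.up4 _ _ h1 h2
  · intro a b
    induction a using Quot.ind
    induction b using Quot.ind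
    rw [hm]
    exact hf _ _
  · intro a b
    induction a using Quot.ind with | _ x =>
    induction b using Quot.ind with | _ y =>
    intro h
    simp only [Quot.lift, Set.mem_setOf_eq] at h ⊢
    apply Quot.sound
    constructor
    · show f (x * y) = 0
      rw [hf, h]; exact selfmul B _
    · show f (y * x) = 0
      rw [hf, h]; exact selfmul B _
  · ext b
    constructor
    · rintro ⟨q, rfl⟩
      induction q using Quot.ind with | _ x =>
      exact ⟨x, rfl⟩
    · rintro ⟨x, rfl⟩
      exact ⟨Quot.mk _ x, rfl⟩
end
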